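/- Let M and N be as in the construction. The map sending each automorphism π of N to its restriction π₀ to the sort P^N = M is an injective group homomorphism from Aut(N) to Aut(M); moreover, combined with the extension map π₀ ↦ π̂₀, it gives a group isomorphism Aut(M) ≅ Aut(N). -/

import Mathlib

/-! The structure `N = N_M` built from a relational structure `M` in the proof of the
main theorem.  `M` has relations `P i` of arity `k i` (indexed by `i : ι`, playing the
role of the pairs `(n, ℓ)`).  The domain of `N` is the disjoint union of a copy of `M`
(the predicate `P^N`), the constant `e`, and the sorts
`Q i = {(i, j, ā) : ā ∈ M^{k i}, j ≤ ω, and j = ω only if ā ∈ P_i^M}`;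
`F i t` projects an element of `Q i` to its `t`-th coordinate, and `G i j` replaces the
index of an element of `Q i` by `j` (both send everything else to `e`).  Here the index
`j ≤ ω` is represented by an element of `ℕ∞`. -/

namespace Constr

variable {M ι : Type} [DecidableEq ι] (k : ι → ℕ) (P : ∀ i, (Fin (k i) → M) → Prop)

/-- The elements of the sort `Q i`. -/
abbrev Qsort (i : ι) : Type := { x : (Fin (k i) → M) × ℕ∞ // x.2 = ⊤ → P i x.1 }

/-- The domain of `N`: a copy of `M`, the point `e`, and the sorts `Q i`. -/
def Ndom : Type := (M ⊕ Unit) ⊕ (Σ i : ι, Qsort k P i)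

/-- The interpretation of the constant `c` of `N`. -/
def e : Ndom k P := Sum.inl (Sum.inr ())

/-- The inclusion of `M` (the predicate `P^N`) into the domain of `N`. -/
def pin (a : M) : Ndom k P := Sum.inl (Sum.inl a)

/-- The inclusion of the sort `Q i` into the domain of `N`. -/
def qin (i : ι) (x : Qsort k P i) : Ndom k P := Sum.inr ⟨i, x⟩

/-- The unary function `F i t` of `N`: the projection of `Q i` onto the `t`-th
`M`-coordinate (and `e` elsewhere). -/
def F (i : ι) (t : Fin (k i)) : Ndom k P → Ndom k P
  | Sum.inr ⟨i', x⟩ =>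
      if h : i' = i then pin k P (x.1.1 (Fin.cast (congrArg k h).symm t)) else e k P
  | _ => e k P

/-- The unary function `G i j` of `N`: replacing the index of an element of `Q i`
by `j < ω` (and `e` elsewhere). -/
def G (i : ι) (j : ℕ) : Ndom k P → Ndom k P
  | Sum.inr ⟨i', x⟩ =>
      if h : i' = i then qin k P i' ⟨(x.1.1, (j : ℕ∞)), fun hj => absurd hj (by simp)⟩
      else e k P
  | _ => e k P

/-- A permutation of the domain of `N` is an automorphism of `N` iff it fixes the
constant `e`, preserves the predicates `P` and `Q i`, and commutes with the functions
`F i t` and `G i j`. -/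
structure IsAutN (π : Equiv.Perm (Ndom k P)) : Prop where
  fix_e : π (e k P) = e k P
  map_P : ∀ a : M, ∃ b : M, π (pin k P a) = pin k P b
  map_Q : ∀ (i : ι) (x : Qsort k P i), ∃ y : Qsort k P i, π (qin k P i x) = qin k P i y
  comm_F : ∀ (i : ι) (t : Fin (k i)) (x : Ndom k P), π (F k P i t x) = F k P i t (π x)
  comm_G : ∀ (i : ι) (j : ℕ) (x : Ndom k P), π (G k P i j x) = G k P i j (π x)

/-- A permutation of `M` is an automorphism of `M` iff it preserves every relation. -/
def IsAutM (σ : Equiv.Perm M) : Prop := ∀ (i : ι) (v : Fin (k i) → M), P i (σ ∘ v) ↔ P i v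


/-- The automorphism group of `M`, as a subgroup of `Sym(M)`. -/
def autM : Subgroup (Equiv.Perm M) where
  carrier := {σ | IsAutM k P σ}
  one_mem' := fun _ _ => Iff.rfl
  mul_mem' := by
    intro σ τ hσ hτ i v
    have h1 := hσ i (⇑τ ∘ v)
    have h2 := hτ i v
    exact (h1.trans h2)
  inv_mem' := by
    intro σ hσ i v
    have := hσ i (⇑σ⁻¹ ∘ v)
    rw [show ⇑σ ∘ ⇑σ⁻¹ ∘ v = v from funext fun t => by simp] at this
    exact this.symm

/-- The automorphism group of `N`, as a subgroup of `Sym(N)`. -/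
def autN : Subgroup (Equiv.Perm (Ndom k P)) where
  carrier := {π | IsAutN k P π}
  one_mem' := ⟨rfl, fun a => ⟨a, rfl⟩, fun i x => ⟨x, rfl⟩, fun _ _ _ => rfl, fun _ _ _ => rfl⟩
  mul_mem' := by
    rintro π σ hπ hσ
    refine ⟨?_, fun a => ?_, fun i x => ?_, fun i t x => ?_, fun i j x => ?_⟩
    · show π (σ _) = _
      rw [hσ.fix_e, hπ.fix_e]
    · obtain ⟨b, hb⟩ := hσ.map_P a
      obtain ⟨c, hc⟩ := hπ.map_P b
      exact ⟨c, by show π (σ _) = _; rw [hb, hc]⟩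
    · obtain ⟨y, hy⟩ := hσ.map_Q i x
      obtain ⟨z, hz⟩ := hπ.map_Q i y
      exact ⟨z, by show π (σ _) = _; rw [hy, hz]⟩
    · show π (σ _) = _
      rw [hσ.comm_F, hπ.comm_F]; rfl
    · show π (σ _) = _
      rw [hσ.comm_G, hπ.comm_G]; rfl
  inv_mem' := by
    rintro π hπ
    have fixe : π⁻¹ (e k P) = e k P := by
      have := congrArg (⇑π⁻¹) hπ.fix_e
      rw [show ∀ y, π⁻¹ (π y) = y from fun y => Equiv.Perm.inv_eq_iff_eq.mpr rfl] at this
      exact this.symm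
    refine ⟨fixe, fun a => ?_, fun i x => ?_, fun i t x => ?_, fun i j x => ?_⟩
    · rcases h : π⁻¹ (pin k P a) with (b | u) | ⟨i, y⟩
      · exact ⟨b, rfl⟩
      · exfalso
        have h2 := congrArg (⇑π) h
        rw [show ∀ y, π (π⁻¹ y) = y from fun y => (Equiv.eq_symm_apply π).mp rfl, show Sum.inl (Sum.inr u) = e k P from rfl,
          hπ.fix_e] at h2
        exact absurd h2 (fun hh => by injection hh with h3; injection h3)
      · exfalso
        obtain ⟨z, hz⟩ := hπ.map_Q i y
        have h2 := congrArg (⇑π) h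
        rw [show ∀ y, π (π⁻¹ y) = y from fun y => (Equiv.eq_symm_apply π).mp rfl, show (Sum.inr ⟨i, y⟩ : Ndom k P) = qin k P i y from rfl,
          hz] at h2
        exact absurd h2 (fun hh => by injection hh)
    · rcases h : π⁻¹ (qin k P i x) with (b | u) | ⟨i', y⟩
      · exfalso
        obtain ⟨c, hc⟩ := hπ.map_P b
        have h2 := congrArg (⇑π) h
        rw [show ∀ y, π (π⁻¹ y) = y from fun y => (Equiv.eq_symm_apply π).mp rfl, show (Sum.inl (Sum.inl b) : Ndom k P) = pin k P b from rfl,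
          hc] at h2
        exact absurd h2 (fun hh => by injection hh)
      · exfalso
        have h2 := congrArg (⇑π) h
        rw [show ∀ y, π (π⁻¹ y) = y from fun y => (Equiv.eq_symm_apply π).mp rfl, show Sum.inl (Sum.inr u) = e k P from rfl,
          hπ.fix_e] at h2
        exact absurd h2 (fun hh => by injection hh)
      · obtain ⟨z, hz⟩ := hπ.map_Q i' y
        have h2 := congrArg (⇑π) h
        rw [show ∀ y, π (π⁻¹ y) = y from fun y => (Equiv.eq_symm_apply π).mp rfl, show (Sum.inr ⟨i', y⟩ : Ndom k P) = qin k P i' y from rfl,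
          hz] at h2
        obtain rfl : i = i' := congrArg Sigma.fst (Sum.inr_injective h2)
        exact ⟨y, rfl⟩
    · have h1 := hπ.comm_F i t (π⁻¹ x)
      rw [show ∀ y, π (π⁻¹ y) = y from fun y => (Equiv.eq_symm_apply π).mp rfl] at h1
      have h2 := congrArg (⇑π⁻¹) h1
      rw [show ∀ y, π⁻¹ (π y) = y from fun y => Equiv.Perm.inv_eq_iff_eq.mpr rfl] at h2
      exact h2.symm
    · have h1 := hπ.comm_G i j (π⁻¹ x)
      rw [show ∀ y, π (π⁻¹ y) = y from fun y => (Equiv.eq_symm_apply π).mp rfl] at h1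
      have h2 := congrArg (⇑π⁻¹) h1
      rw [show ∀ y, π⁻¹ (π y) = y from fun y => Equiv.Perm.inv_eq_iff_eq.mpr rfl] at h2
      exact h2.symm

/-! An automorphism `π` of `N` fixes `e` and maps `M` to `M`, so it restricts to a permutation
`σ` of `M`. Commuting with the projections `F i t` forces `π` to act on `(v, j) ∈ Q i` by
`v ↦ σ ∘ v`, and commuting with `G i j`, whose fixed points in `Q i` are the elements of index
`j`, forces it to keep the index. Hence `π` is determined by `σ`, and `σ` preserves `P i`
because `(v, ω) ∈ Q i` exactly when `P i v`. Conversely every automorphism of `M`, acting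
coordinatewise on each `Q i`, is such a restriction. -/

omit [DecidableEq ι] in
lemma pin_injective : Function.Injective (pin k P) := fun _ _ h => by
  injection h with h; injection h

omit [DecidableEq ι] in
lemma qin_injective (i : ι) : Function.Injective (qin k P i) := fun _ _ h => by
  injection h with h
  exact eq_of_heq (Sigma.mk.inj_iff.1 h).2

omit [DecidableEq ι] in
@[elab_as_elim]
lemma Ndom.induction {motive : Ndom k P → Prop} (pin : ∀ a, motive (pin k P a))
    (e : motive (e k P)) (qin : ∀ i x, motive (qin k P i x)) (z : Ndom k P) : motive z := by
  rcases z with (a | ⟨⟩) | ⟨i, x⟩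
  exacts [pin a, e, qin i x]

lemma F_qin (i : ι) (t : Fin (k i)) (x : Qsort k P i) :
    F k P i t (qin k P i x) = pin k P (x.1.1 t) :=
  dif_pos rfl

lemma G_qin (i : ι) (j : ℕ) (x : Qsort k P i) :
    G k P i j (qin k P i x) =
      qin k P i ⟨(x.1.1, (j : ℕ∞)), fun hj => absurd hj (by simp)⟩ :=
  dif_pos rfl

lemma F_qin_of_ne {i i' : ι} (h : i' ≠ i) (t : Fin (k i)) (x : Qsort k P i') :
    F k P i t (qin k P i' x) = e k P :=
  dif_neg h

lemma G_qin_of_ne {i i' : ι} (h : i' ≠ i) (j : ℕ) (x : Qsort k P i') :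
    G k P i j (qin k P i' x) = e k P :=
  dif_neg h

lemma G_qin_eq_self_iff (i : ι) (j : ℕ) (x : Qsort k P i) :
    G k P i j (qin k P i x) = qin k P i x ↔ x.1.2 = j := by
  rw [G_qin, (qin_injective k P i).eq_iff, Subtype.ext_iff, Prod.ext_iff]
  simp [eq_comm]

omit [DecidableEq ι] in
/-- Junk value `a` when `π (pin a)` lies outside `M`. -/
def restr (π : Equiv.Perm (Ndom k P)) (a : M) : M :=
  match π (pin k P a) with
  | Sum.inl (Sum.inl b) => b
  | _ => a

namespace IsAutN

variable {k P} {π τ : Equiv.Perm (Ndom k P)}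

lemma inv (hπ : IsAutN k P π) : IsAutN k P π⁻¹ :=
  (autN k P).inv_mem hπ

lemma mul (hπ : IsAutN k P π) (hτ : IsAutN k P τ) : IsAutN k P (π * τ) :=
  (autN k P).mul_mem hπ hτ

lemma apply_pin (hπ : IsAutN k P π) (a : M) : π (pin k P a) = pin k P (restr k P π a) := by
  obtain ⟨b, hb⟩ := hπ.map_P a
  have hrestr : restr k P π a = b := by unfold restr; rw [hb]; rfl
  rw [hb, hrestr]

lemma restr_mul (hπ : IsAutN k P π) (hτ : IsAutN k P τ) (a : M) :
    restr k P (π * τ) a = restr k P π (restr k P τ a) := by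
  apply pin_injective k P
  rw [← (hπ.mul hτ).apply_pin, Equiv.Perm.mul_apply, hτ.apply_pin, hπ.apply_pin]

lemma restr_inv_restr (hπ : IsAutN k P π) (a : M) : restr k P π⁻¹ (restr k P π a) = a := by
  rw [← restr_mul hπ.inv hπ, inv_mul_cancel]
  exact pin_injective k P (Equiv.Perm.one_apply _)

lemma qin_image (hπ : IsAutN k P π) {i : ι} {x y : Qsort k P i}
    (hy : π (qin k P i x) = qin k P i y) : y.1 = (restr k P π ∘ x.1.1, x.1.2) := by
  refine Prod.ext (funext fun t => ?_) ?_
  · apply pin_injective k P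
    rw [← F_qin, ← hy, ← hπ.comm_F, F_qin, hπ.apply_pin]
    rfl
  · have hfix : ∀ j : ℕ, y.1.2 = j ↔ x.1.2 = j := fun j => by
      rw [← G_qin_eq_self_iff, ← G_qin_eq_self_iff, ← hy, ← hπ.comm_G, π.injective.eq_iff]
    cases hx : x.1.2 with
    | coe j => exact (hfix j).2 hx
    | top =>
      cases hy' : y.1.2 with
      | top => rfl
      | coe j => simp [(hfix j).1 hy'] at hx

lemma restr_rel (hπ : IsAutN k P π) {i : ι} {v : Fin (k i) → M} (hv : P i v) :
    P i (restr k P π ∘ v) := by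
  obtain ⟨y, hy⟩ := hπ.map_Q i ⟨(v, ⊤), fun _ => hv⟩
  simpa [hπ.qin_image hy] using y.2

def restrPerm (hπ : IsAutN k P π) : Equiv.Perm M where
  toFun := restr k P π
  invFun := restr k P π⁻¹
  left_inv := hπ.restr_inv_restr
  right_inv a := by simpa using hπ.inv.restr_inv_restr a

lemma isAutM_restrPerm (hπ : IsAutN k P π) : IsAutM k P hπ.restrPerm := fun _ _ =>
  ⟨fun hv => by
    simpa [Function.comp_def, restrPerm, hπ.restr_inv_restr] using hπ.inv.restr_rel hv,
    hπ.restr_rel⟩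

lemma eq_of_restr_eq (hπ : IsAutN k P π) (hτ : IsAutN k P τ)
    (h : restr k P π = restr k P τ) : π = τ := by
  ext z
  induction z using Ndom.induction with
  | pin a => rw [hπ.apply_pin, hτ.apply_pin, h]
  | e => rw [hπ.fix_e, hτ.fix_e]
  | qin i x =>
    obtain ⟨y, hy⟩ := hπ.map_Q i x
    obtain ⟨z, hz⟩ := hτ.map_Q i x
    have hyz : y = z := Subtype.ext ((hπ.qin_image hy).trans (h ▸ (hτ.qin_image hz).symm))
    rw [hy, hz, hyz]

end IsAutN

namespace IsAutM

variable {k P} {σ : Equiv.Perm M}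

omit [DecidableEq ι] in
def qsortPerm (hσ : IsAutM k P σ) (i : ι) : Equiv.Perm (Qsort k P i) :=
  (Equiv.prodCongr (Equiv.piCongrRight fun _ => σ) (Equiv.refl ℕ∞)).subtypeEquiv
    fun x => imp_congr_right fun _ => (hσ i x.1).symm

omit [DecidableEq ι] in
def extPerm (hσ : IsAutM k P σ) : Equiv.Perm (Ndom k P) :=
  Equiv.sumCongr (Equiv.sumCongr σ (Equiv.refl Unit)) (Equiv.sigmaCongrRight hσ.qsortPerm)

omit [DecidableEq ι] in
lemma extPerm_pin (hσ : IsAutM k P σ) (a : M) : hσ.extPerm (pin k P a) = pin k P (σ a) := rfl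

omit [DecidableEq ι] in
lemma extPerm_qin (hσ : IsAutM k P σ) (i : ι) (x : Qsort k P i) :
    hσ.extPerm (qin k P i x) = qin k P i (hσ.qsortPerm i x) := rfl

lemma isAutN_extPerm (hσ : IsAutM k P σ) : IsAutN k P hσ.extPerm := by
  refine ⟨rfl, fun a => ⟨σ a, rfl⟩, fun i x => ⟨_, rfl⟩, fun i t z => ?_, fun i j z => ?_⟩
  · induction z using Ndom.induction with
    | pin a => rfl
    | e => rfl
    | qin i' x =>
      by_cases h : i' = i
      · subst h
        rw [extPerm_qin, F_qin, F_qin, extPerm_pin]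
        rfl
      · rw [extPerm_qin, F_qin_of_ne k P h, F_qin_of_ne k P h]
        rfl
  · induction z using Ndom.induction with
    | pin a => rfl
    | e => rfl
    | qin i' x =>
      by_cases h : i' = i
      · subst h
        rw [extPerm_qin, G_qin, G_qin, extPerm_qin]
        rfl
      · rw [extPerm_qin, G_qin_of_ne k P h, G_qin_of_ne k P h]
        rfl

omit [DecidableEq ι] in
lemma restr_extPerm (hσ : IsAutM k P σ) : restr k P hσ.extPerm = σ := rfl

end IsAutM

def restrHom : autN k P →* autM k P :=
  MonoidHom.mk' (fun π => ⟨IsAutN.restrPerm π.2, IsAutN.isAutM_restrPerm π.2⟩)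
    fun π τ => Subtype.ext (Equiv.ext (IsAutN.restr_mul π.2 τ.2))

lemma apply_pin_eq_pin_restrHom (π : autN k P) (a : M) :
    (π : Equiv.Perm (Ndom k P)) (pin k P a) =
      pin k P ((restrHom k P π : Equiv.Perm M) a) :=
  IsAutN.apply_pin π.2 a

lemma restrHom_injective : Function.Injective (restrHom k P) := fun π τ h =>
  Subtype.ext (IsAutN.eq_of_restr_eq π.2 τ.2 (congrArg (fun σ : autM k P => ⇑σ.1) h))

lemma restrHom_surjective : Function.Surjective (restrHom k P) := fun σ =>
  ⟨⟨IsAutM.extPerm σ.2, IsAutM.isAutN_extPerm σ.2⟩,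
    Subtype.ext (Equiv.ext fun a => congrFun (IsAutM.restr_extPerm σ.2) a)⟩

theorem autN_restriction_group_iso_general {M ι : Type} [DecidableEq ι]
    (k : ι → ℕ) (P : ∀ i, (Fin (k i) → M) → Prop) :
    ∃ Φ : autN k P →* autM k P,
      (∀ (π : autN k P) (a : M),
        (π : Equiv.Perm (Ndom k P)) (pin k P a) = pin k P ((Φ π : Equiv.Perm M) a)) ∧
      Function.Injective Φ ∧ Function.Bijective Φ :=
  ⟨restrHom k P, apply_pin_eq_pin_restrHom k P, restrHom_injective k P,
    restrHom_injective k P, restrHom_surjective k P⟩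

/-- Restriction to the sort `P^N = M` is an injective group
homomorphism from `Aut(N)` to `Aut(M)`, and (together with the extension map) it is a
group isomorphism `Aut(N) ≅ Aut(M)`. -/
theorem autN_restriction_group_iso {M ι : Type} [DecidableEq ι] [Countable M] [Countable ι]
    (k : ι → ℕ) (P : ∀ i, (Fin (k i) → M) → Prop)
    (hP : ∀ (i : ι) (v : Fin (k i) → M), P i v → Function.Injective v) :
    ∃ Φ : autN k P →* autM k P,
      (∀ (π : autN k P) (a : M),
        (π : Equiv.Perm (Ndom k P)) (pin k P a) = pin k P ((Φ π : Equiv.Perm M) a)) ∧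
      Function.Injective Φ ∧ Function.Bijective Φ :=
  autN_restriction_group_iso_general k P

end Constr
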